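/- The weak global dimension of R is at most 1 if and only if the flat-precover completing domain of every left R-module is closed under submodules. -/

import Mathlib

open CategoryTheory

universe u

variable {R : Type u} [Ring R]

/-- The submodule of relations defining the balanced tensor product `W ⊗_R M` of a
right `R`-module `W` and a left `R`-module `M` as a quotient of `W ⊗_ℤ M`. -/
abbrev tensorRel (W : Type u) [AddCommGroup W] [Module Rᵐᵒᵖ W]
    (M : Type u) [AddCommGroup M] [Module R M] : Submodule ℤ (TensorProduct ℤ W M) :=
  Submodule.span ℤ
    {x | ∃ (w : W) (r : R) (m : M), x = (MulOpposite.op r • w) ⊗ₜ[ℤ] m - w ⊗ₜ[ℤ] (r • m)}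

/-- The balanced tensor product `W ⊗_R M` over the (possibly noncommutative) ring `R`. -/
abbrev RTensor (W : Type u) [AddCommGroup W] [Module Rᵐᵒᵖ W]
    (M : Type u) [AddCommGroup M] [Module R M] : Type u :=
  TensorProduct ℤ W M ⧸ tensorRel (R := R) W M

/-- The map `W ⊗_R M → K ⊗_R M` induced by a morphism `i : W → K` of right
`R`-modules. -/
noncomputable def tensorMap {W K : Type u} [AddCommGroup W] [Module Rᵐᵒᵖ W]
    [AddCommGroup K] [Module Rᵐᵒᵖ K] (i : W →ₗ[Rᵐᵒᵖ] K)
    (M : Type u) [AddCommGroup M] [Module R M] :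
    RTensor (R := R) W M →ₗ[ℤ] RTensor (R := R) K M :=
  Submodule.mapQ _ _ (LinearMap.rTensor M i.toAddMonoidHom.toIntLinearMap) (by
    refine Submodule.span_le.2 ?_
    rintro x ⟨w, r, m, rfl⟩
    refine Submodule.mem_comap.2 (Submodule.subset_span ?_)
    refine ⟨i w, r, m, ?_⟩
    exact (map_sub (LinearMap.rTensor M i.toAddMonoidHom.toIntLinearMap) _ _).trans
      (by simp [LinearMap.rTensor_tmul, map_smul]))

/-- `M` is a flat left `R`-module: tensoring with `M` preserves injectivity of
morphisms of right `R`-modules. -/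
def IsFlat (M : Type u) [AddCommGroup M] [Module R M] : Prop :=
  ∀ (W K : Type u) [AddCommGroup W] [Module Rᵐᵒᵖ W] [AddCommGroup K] [Module Rᵐᵒᵖ K]
    (i : W →ₗ[Rᵐᵒᵖ] K), Function.Injective i → Function.Injective (tensorMap (R := R) i M)

/-- `N` belongs to the flat-precover completing domain `𝔉⁻¹(M)` of `M`:
every morphism `M ⟶ N` factors through a flat module. -/
def FlatDom (M N : ModuleCat.{u} R) : Prop :=
  ∀ f : M ⟶ N, ∃ (F : ModuleCat.{u} R) (h : M ⟶ F) (k : F ⟶ N),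
    IsFlat (R := R) ↥F ∧ h ≫ k = f

/-!
If submodules of flat modules are flat, a factorisation `M → F → N` (with `F` flat, via `k`) of a
map `M → K ⊆ N` restricts to a factorisation through the flat submodule `k⁻¹(K) ⊆ F`.
Conversely, for `K ⊆ F` with `F` flat, `F` lies in `𝔉⁻¹(K)`, hence so does `K`; so `id_K`
factors through a flat module, making `K` a retract of a flat module, and retracts of flat
modules are flat because `W ⊗_R -` preserves retractions.
-/

noncomputable def lTensorMap (W : Type u) [AddCommGroup W] [Module Rᵐᵒᵖ W]
    {M M' : Type u} [AddCommGroup M] [Module R M] [AddCommGroup M'] [Module R M']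
    (f : M →ₗ[R] M') :
    RTensor (R := R) W M →ₗ[ℤ] RTensor (R := R) W M' :=
  Submodule.mapQ _ _ (LinearMap.lTensor W f.toAddMonoidHom.toIntLinearMap) (by
    refine Submodule.span_le.2 ?_
    rintro x ⟨w, r, m, rfl⟩
    refine Submodule.mem_comap.2 (Submodule.subset_span ⟨w, r, f m, ?_⟩)
    exact (map_sub (LinearMap.lTensor W f.toAddMonoidHom.toIntLinearMap) _ _).trans
      (by simp [LinearMap.lTensor_tmul, map_smul]))

section lTensorMap

variable {M M' M'' : Type u} [AddCommGroup M] [Module R M] [AddCommGroup M'] [Module R M']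
  [AddCommGroup M''] [Module R M'']

lemma tensorMap_lTensorMap {W K : Type u} [AddCommGroup W] [Module Rᵐᵒᵖ W]
    [AddCommGroup K] [Module Rᵐᵒᵖ K] (i : W →ₗ[Rᵐᵒᵖ] K) (f : M →ₗ[R] M')
    (x : RTensor (R := R) W M) :
    tensorMap (R := R) i M' (lTensorMap W f x) = lTensorMap K f (tensorMap (R := R) i M x) := by
  obtain ⟨y, rfl⟩ := Submodule.Quotient.mk_surjective _ x
  exact congr_arg (Submodule.Quotient.mk (p := tensorRel K M'))
    (LinearMap.congr_fun ((LinearMap.rTensor_comp_lTensor _ _ _).trans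
      (LinearMap.lTensor_comp_rTensor _ _ _).symm) y)

lemma lTensorMap_comp_apply (W : Type u) [AddCommGroup W] [Module Rᵐᵒᵖ W]
    (f : M →ₗ[R] M') (g : M' →ₗ[R] M'') (x : RTensor (R := R) W M) :
    lTensorMap W g (lTensorMap W f x) = lTensorMap W (g ∘ₗ f) x := by
  obtain ⟨y, rfl⟩ := Submodule.Quotient.mk_surjective _ x
  exact congr_arg (Submodule.Quotient.mk (p := tensorRel W M''))
    (LinearMap.lTensor_comp_apply _ _ _ y).symm

lemma lTensorMap_id_apply (W : Type u) [AddCommGroup W] [Module Rᵐᵒᵖ W]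
    (x : RTensor (R := R) W M) : lTensorMap W (LinearMap.id : M →ₗ[R] M) x = x := by
  obtain ⟨y, rfl⟩ := Submodule.Quotient.mk_surjective _ x
  exact congr_arg (Submodule.Quotient.mk (p := tensorRel W M)) (LinearMap.lTensor_id_apply _ _ y)

lemma IsFlat.of_retract (h : M →ₗ[R] M') (k : M' →ₗ[R] M) (hkh : k ∘ₗ h = LinearMap.id)
    (hM' : IsFlat (R := R) M') : IsFlat (R := R) M := by
  intro W K _ _ _ _ i hi x y hxy
  have hsection : ∀ z : RTensor (R := R) W M, lTensorMap W k (lTensorMap W h z) = z := fun z => by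
    rw [lTensorMap_comp_apply, hkh, lTensorMap_id_apply]
  have hxy' : lTensorMap W h x = lTensorMap W h y :=
    hM' W K i hi (by rw [tensorMap_lTensorMap, tensorMap_lTensorMap, hxy])
  rw [← hsection x, hxy', hsection]

end lTensorMap

lemma flatDom_of_isFlat {M N : ModuleCat.{u} R} (hN : IsFlat (R := R) N) : FlatDom M N :=
  fun f => ⟨N, f, 𝟙 N, hN, Category.comp_id f⟩

lemma IsFlat.of_flatDom_self {M : ModuleCat.{u} R} (hM : FlatDom M M) : IsFlat (R := R) M := by
  obtain ⟨F, h, k, hF, hhk⟩ := hM (𝟙 M)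
  exact IsFlat.of_retract h.hom k.hom (congr_arg ModuleCat.Hom.hom hhk) hF

lemma FlatDom.submodule
    (hsub : ∀ F : ModuleCat.{u} R, IsFlat (R := R) F → ∀ K : Submodule R F, IsFlat (R := R) K)
    {M N : ModuleCat.{u} R} (hMN : FlatDom M N) (K : Submodule R N) :
    FlatDom M (ModuleCat.of R K) := by
  intro f
  obtain ⟨F, h, k, hF, hhk⟩ := hMN (f ≫ ModuleCat.ofHom K.subtype)
  have hk : ∀ m, k.hom (h.hom m) = f.hom m := fun m => congr_arg (fun g => g.hom m) hhk
  have hmem : ∀ m, h.hom m ∈ K.comap k.hom := fun m => by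
    rw [Submodule.mem_comap, hk]
    exact (f.hom m).2
  refine ⟨ModuleCat.of R (K.comap k.hom), ModuleCat.ofHom (h.hom.codRestrict _ hmem),
    ModuleCat.ofHom (k.hom.restrict fun _ hx => hx), hsub F hF _, ?_⟩
  ext m
  exact hk m

theorem stmt_16 :
    (∀ F : ModuleCat.{u} R, IsFlat (R := R) ↥F →
        ∀ K : Submodule R ↥F, IsFlat (R := R) ↥K) ↔
      ∀ M N : ModuleCat.{u} R, FlatDom M N →
        ∀ K : Submodule R ↥N, FlatDom M (ModuleCat.of R ↥K) :=
  ⟨fun hsub M N hMN K => hMN.submodule hsub K,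
    fun hdom F hF K => IsFlat.of_flatDom_self (hdom _ F (flatDom_of_isFlat hF) K)⟩
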